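/- arXiv:2205.14523 — 2 statements merged into one kernel-verified Lean document; each statement's English description precedes it below -/
import Mathlib

section
/- Let x : T → ℝⁿ be a signal and φ an STL formula whose robust semantics ρ^φ and robustness degree RD^φ satisfy ρ^φ(x,t) ≤ RD^φ(x,t). If RD^φ(x,t) > 0, then every signal x' with κ(x,x') < RD^φ(x,t) satisfies β^φ(x',t) = ⊤, where κ(x,x') := sup_{t∈T} d(x(t), x'(t)). In particular, RD^φ(x,t) > 0 implies β^φ(x,t) = ⊤. -/
open scoped ENNReal

/-- Robust neighborhood property of the STL robustness degree: with
`κ(x,x') = sup_t d(x(t),x'(t))` and `RD = dist_κ(x, cl(L^{¬φ}))` the distance of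
`x` to the (metric) closure of the set of violating signals, `RD > 0` implies
that every signal within distance `< RD` of `x` satisfies `φ`; in particular `x`
itself does. The hypothesis `ρ ≤ RD` records soundness of the robust semantics. -/
theorem robustness_degree_robust_neighborhood {T : Type*} {n : ℕ}
    (sat : (T → EuclideanSpace ℝ (Fin n)) → Prop)  -- x' ↦ (β^φ(x',t) = ⊤)
    (κ : (T → EuclideanSpace ℝ (Fin n)) → (T → EuclideanSpace ℝ (Fin n)) → ℝ≥0∞)
    (hκ : ∀ x x', κ x x' = ⨆ t : T, edist (x t) (x' t))
    (L clL : Set (T → EuclideanSpace ℝ (Fin n)))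
    (hL : L = {x' | ¬ sat x'})
    -- the closure of `L` with respect to the (extended pseudo-)metric `κ`
    (hclL : clL = {y | (⨅ x' ∈ L, κ y x') = 0})
    (x : T → EuclideanSpace ℝ (Fin n)) (RD ρ : ℝ≥0∞)
    (hRD : RD = ⨅ y ∈ clL, κ x y) (hρ : ρ ≤ RD) (hpos : 0 < RD) :
    (∀ x', κ x x' < RD → sat x') ∧ sat x := by
  have hself : ∀ y : T → EuclideanSpace ℝ (Fin n), κ y y = 0 := by
    intro y
    rw [hκ]
    simp
  have main : ∀ x', κ x x' < RD → sat x' := by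
    intro x' hlt
    by_contra hns
    have hmem : x' ∈ L := by rw [hL]; exact hns
    have hcl : x' ∈ clL := by
      rw [hclL]
      refine le_antisymm ?_ zero_le
      calc (⨅ z ∈ L, κ x' z) ≤ κ x' x' := biInf_le _ hmem
        _ = 0 := hself x'
    have : RD ≤ κ x x' := hRD ▸ biInf_le _ hcl
    exact absurd hlt (not_lt.mpr this)
  exact ⟨main, main x (by rw [hself]; exact hpos)⟩
end

section
/- Let Z be a random variable with continuous CDF. Then CVaR_β(Z) = E(Z | Z ≥ VaR_β(Z)), i.e., the infimum in the definition of CVaR is attained and equals the conditional expectation of Z above its β-quantile. -/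
open MeasureTheory Filter

/-- For an integrable random variable `Z` with continuous CDF, the infimum in
the definition of `CVaR_β` is attained at `VaR_β(Z)` and equals the conditional
expectation `E(Z | Z ≥ VaR_β(Z))`, using that `P(Z ≥ VaR_β(Z)) = 1 - β`. -/
theorem cvar_eq_conditional_expectation {Ω : Type*} [MeasurableSpace Ω]
    (P : Measure Ω) [IsProbabilityMeasure P] (β : ℝ) (hβ : β ∈ Set.Ioo (0:ℝ) 1)
    (Z : Ω → ℝ) (hZm : Measurable Z) (hZ : Integrable Z P)
    (hFc : Continuous (fun α : ℝ => (P {ω | Z ω ≤ α}).toReal))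
    (v : ℝ) (hv : v = sInf {α : ℝ | β ≤ (P {ω | Z ω ≤ α}).toReal}) :
    (⨅ α : ℝ, (α + (1 - β)⁻¹ * ∫ ω, max (Z ω - α) 0 ∂P)) =
        v + (1 - β)⁻¹ * ∫ ω, max (Z ω - v) 0 ∂P ∧
    (⨅ α : ℝ, (α + (1 - β)⁻¹ * ∫ ω, max (Z ω - α) 0 ∂P)) =
        (∫ ω in {ω | v ≤ Z ω}, Z ω ∂P) / (P {ω | v ≤ Z ω}).toReal := by
  obtain ⟨hβ0, hβ1⟩ := hβ
  set F : ℝ → ℝ := fun α => (P {ω | Z ω ≤ α}).toReal with hFdef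
  have hc : (0:ℝ) < 1 - β := by linarith
  have hFm : Monotone F := by
    intro a b hab
    exact ENNReal.toReal_mono (measure_ne_top _ _)
      (measure_mono (fun ω (h : Z ω ≤ a) => le_trans h hab))
  -- the set in the definition of VaR
  set S : Set ℝ := {α : ℝ | β ≤ F α} with hSdef
  -- S is nonempty
  have hne : S.Nonempty := by
    have hmono : Monotone (fun n : ℕ => {ω | Z ω ≤ (n:ℝ)}) := by
      intro n m hnm ω (h : Z ω ≤ (n:ℝ))
      exact le_trans h (by exact_mod_cast hnm)
    have hU : (⋃ n : ℕ, {ω | Z ω ≤ (n:ℝ)}) = Set.univ := by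
      ext ω
      simp only [Set.mem_iUnion, Set.mem_univ, iff_true, Set.mem_setOf_eq]
      exact ⟨⌈Z ω⌉₊, Nat.le_ceil _⟩
    have ht : Tendsto (fun n : ℕ => P {ω | Z ω ≤ (n:ℝ)}) atTop (nhds 1) := by
      have := tendsto_measure_iUnion_atTop (μ := P) hmono
      rwa [hU, measure_univ] at this
    have ht' : Tendsto (fun n : ℕ => F (n:ℝ)) atTop (nhds 1) := by
      have := (ENNReal.tendsto_toReal (a := 1) (by simp)).comp ht
      exact this
    have : ∀ᶠ n : ℕ in atTop, β ≤ F (n:ℝ) :=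
      ht'.eventually_const_le hβ1
    obtain ⟨n, hn⟩ := this.exists
    exact ⟨(n:ℝ), hn⟩
  -- S is bounded below
  have hbdd : BddBelow S := by
    have hanti : Antitone (fun n : ℕ => {ω | Z ω ≤ -(n:ℝ)}) := by
      intro n m hnm ω (h : Z ω ≤ -(m:ℝ))
      exact le_trans h (by simp; exact_mod_cast hnm)
    have hI : (⋂ n : ℕ, {ω | Z ω ≤ -(n:ℝ)}) = ∅ := by
      ext ω
      simp only [Set.mem_iInter, Set.mem_empty_iff_false, iff_false, not_forall,
        Set.mem_setOf_eq, not_le]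
      obtain ⟨n, hn⟩ := exists_nat_gt (-Z ω)
      exact ⟨n, by linarith⟩
    have ht : Tendsto (fun n : ℕ => P {ω | Z ω ≤ -(n:ℝ)}) atTop (nhds 0) := by
      have := tendsto_measure_iInter_atTop (μ := P)
        (s := fun n : ℕ => {ω | Z ω ≤ -(n:ℝ)})
        (fun n => ((measurableSet_le hZm measurable_const)).nullMeasurableSet)
        hanti ⟨0, measure_ne_top _ _⟩
      rwa [hI, measure_empty] at this
    have ht' : Tendsto (fun n : ℕ => F (-(n:ℝ))) atTop (nhds 0) := by
      have := (ENNReal.tendsto_toReal (a := 0) (by simp)).comp ht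
      exact this
    have : ∀ᶠ n : ℕ in atTop, F (-(n:ℝ)) < β := ht'.eventually_lt_const hβ0
    obtain ⟨n, hn⟩ := this.exists
    refine ⟨-(n:ℝ), fun α hα => ?_⟩
    by_contra h
    push_neg at h
    exact absurd (le_trans hα (hFm h.le)) (not_le.2 hn)
  have hSclosed : IsClosed S := isClosed_le continuous_const hFc
  have hvmem : v ∈ S := hv ▸ hSclosed.csInf_mem hne hbdd
  have hβle : β ≤ F v := hvmem
  have hFvle : F v ≤ β := by
    by_contra h
    push_neg at h
    have hopen : IsOpen {α : ℝ | β < F α} := isOpen_lt continuous_const hFc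
    obtain ⟨ε, hε, hball⟩ := Metric.isOpen_iff.1 hopen v h
    have hdist : dist (v - ε / 2) v < ε := by
      rw [Real.dist_eq, abs_of_nonpos (by linarith : v - ε/2 - v ≤ 0)]
      linarith
    have hmem : v - ε / 2 ∈ S := by
      have h3 : β < F (v - ε / 2) := hball hdist
      exact le_of_lt h3
    have h2 : sInf S ≤ v - ε / 2 := csInf_le hbdd hmem
    rw [← hv] at h2
    linarith
  have hFv : F v = β := le_antisymm hFvle hβle
  -- P {Z < v} = β
  have hlt : (P {ω | Z ω < v}).toReal = β := by
    have hmono : Monotone (fun n : ℕ => {ω | Z ω ≤ v - 1 / (n + 1)}) := by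
      intro n m hnm ω (h : Z ω ≤ v - 1/(n+1))
      refine le_trans h ?_
      have : (1:ℝ)/(m+1) ≤ 1/(n+1) := by
        apply one_div_le_one_div_of_le (by positivity)
        exact_mod_cast by exact_mod_cast add_le_add_left (Nat.cast_le.2 hnm) 1
      linarith
    have hU : (⋃ n : ℕ, {ω | Z ω ≤ v - 1 / (n + 1)}) = {ω | Z ω < v} := by
      ext ω
      simp only [Set.mem_iUnion, Set.mem_setOf_eq]
      constructor
      · rintro ⟨n, hn⟩
        have : (0:ℝ) < 1/(n+1) := by positivity
        linarith
      · intro h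
        obtain ⟨n, hn⟩ := exists_nat_one_div_lt (show (0:ℝ) < v - Z ω by linarith)
        exact ⟨n, by linarith⟩
    have ht : Tendsto (fun n : ℕ => P {ω | Z ω ≤ v - 1 / (n + 1)}) atTop
        (nhds (P {ω | Z ω < v})) := by
      have := tendsto_measure_iUnion_atTop (μ := P) hmono
      rwa [hU] at this
    have ht' : Tendsto (fun n : ℕ => F (v - 1 / (n + 1))) atTop
        (nhds ((P {ω | Z ω < v}).toReal)) := by
      have := (ENNReal.tendsto_toReal (measure_ne_top _ _)).comp ht
      exact this
    have harg : Tendsto (fun n : ℕ => v - 1 / ((n:ℝ) + 1)) atTop (nhds v) := by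
      have := tendsto_one_div_add_atTop_nhds_zero_nat (𝕜 := ℝ)
      have := (tendsto_const_nhds (x := v) (f := atTop (α := ℕ))).sub this
      simpa using this
    have ht'' : Tendsto (fun n : ℕ => F (v - 1 / (n + 1))) atTop (nhds (F v)) :=
      (hFc.tendsto v).comp harg
    have := tendsto_nhds_unique ht' ht''
    rw [this, hFv]
  -- P {v ≤ Z} = 1 - β
  have hSm : MeasurableSet {ω | v ≤ Z ω} := measurableSet_le measurable_const hZm
  have hPS : (P {ω | v ≤ Z ω}).toReal = 1 - β := by
    have hcompl : {ω | v ≤ Z ω} = {ω | Z ω < v}ᶜ := by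
      ext ω; simp [not_lt]
    rw [hcompl, measure_compl (measurableSet_lt hZm measurable_const) (measure_ne_top _ _),
      measure_univ, ENNReal.toReal_sub_of_le prob_le_one (by simp), hlt, ENNReal.toReal_one]
  -- P {v < Z} = 1 - β
  have hPS' : (P {ω | v < Z ω}).toReal = 1 - β := by
    have hcompl : {ω | v < Z ω} = {ω | Z ω ≤ v}ᶜ := by
      ext ω; simp [not_le]
    rw [hcompl, measure_compl (measurableSet_le hZm measurable_const) (measure_ne_top _ _),
      measure_univ, ENNReal.toReal_sub_of_le prob_le_one (by simp), ENNReal.toReal_one]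
    have : (P {ω | Z ω ≤ v}).toReal = β := hFv
    rw [this]
  -- integrability of the positive parts
  have hint : ∀ α : ℝ, Integrable (fun ω => max (Z ω - α) 0) P := fun α =>
    (hZ.sub (integrable_const α)).sup (integrable_const 0)
  -- the indicator function of {v < Z}
  set I : Ω → ℝ := Set.indicator {ω | v < Z ω} (fun _ => 1) with hIdef
  have hSm' : MeasurableSet {ω | v < Z ω} := measurableSet_lt measurable_const hZm
  have hIint : Integrable I P := (integrable_const (1:ℝ)).indicator hSm'
  have hIintegral : ∫ ω, I ω ∂P = 1 - β := by
    rw [hIdef]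
    rw [integral_indicator_const (1:ℝ) hSm']
    simp [hPS']
    exact hPS'
  -- key inequality : the objective at v is a global lower bound
  have hkey : ∀ α : ℝ, v + (1 - β)⁻¹ * ∫ ω, max (Z ω - v) 0 ∂P ≤
      α + (1 - β)⁻¹ * ∫ ω, max (Z ω - α) 0 ∂P := by
    intro α
    have hpt : ∀ ω, max (Z ω - v) 0 - (α - v) * I ω ≤ max (Z ω - α) 0 := by
      intro ω
      rw [hIdef]
      by_cases h : v < Z ω
      · have hm : ω ∈ {ω | v < Z ω} := h
        rw [Set.indicator_of_mem hm]
        have h1 : max (Z ω - v) 0 = Z ω - v := max_eq_left (by linarith)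
        have h2 : Z ω - α ≤ max (Z ω - α) 0 := le_max_left _ _
        rw [h1]; linarith
      · have hm : ω ∉ {ω | v < Z ω} := h
        rw [Set.indicator_of_notMem hm]
        push_neg at h
        have h1 : max (Z ω - v) 0 = 0 := max_eq_right (by linarith)
        rw [h1]
        simp [le_max_right]
    have hintineq : ∫ ω, (max (Z ω - v) 0 - (α - v) * I ω) ∂P ≤
        ∫ ω, max (Z ω - α) 0 ∂P :=
      integral_mono ((hint v).sub (hIint.const_mul (α - v))) (hint α) hpt
    have hcomp : ∫ ω, (max (Z ω - v) 0 - (α - v) * I ω) ∂P =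
        (∫ ω, max (Z ω - v) 0 ∂P) - (α - v) * (1 - β) := by
      rw [integral_sub (hint v) (hIint.const_mul (α - v)), integral_const_mul,
        hIintegral]
    rw [hcomp] at hintineq
    have hinv : (1 - β)⁻¹ * (1 - β) = 1 := inv_mul_cancel₀ (ne_of_gt hc)
    have := mul_le_mul_of_nonneg_left hintineq (le_of_lt (inv_pos.2 hc))
    rw [mul_sub, mul_comm ((1-β)⁻¹) ((α - v) * (1 - β)), mul_assoc, mul_comm (1-β),
      hinv, mul_one] at this
    linarith
  -- the infimum is attained at v
  have hinf : (⨅ α : ℝ, (α + (1 - β)⁻¹ * ∫ ω, max (Z ω - α) 0 ∂P)) =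
      v + (1 - β)⁻¹ * ∫ ω, max (Z ω - v) 0 ∂P := by
    have hbb : BddBelow (Set.range fun α : ℝ =>
        α + (1 - β)⁻¹ * ∫ ω, max (Z ω - α) 0 ∂P) := by
      refine ⟨v + (1 - β)⁻¹ * ∫ ω, max (Z ω - v) 0 ∂P, ?_⟩
      rintro x ⟨α, rfl⟩
      exact hkey α
    exact le_antisymm (ciInf_le hbb v) (le_ciInf hkey)
  refine ⟨hinf, ?_⟩
  rw [hinf]
  -- rewrite the positive part at v as a set integral
  have hmax : ∀ ω, max (Z ω - v) 0 =
      Set.indicator {ω | v ≤ Z ω} (fun ω => Z ω - v) ω := by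
    intro ω
    by_cases h : v ≤ Z ω
    · have hm : ω ∈ {ω | v ≤ Z ω} := h
      rw [Set.indicator_of_mem hm]; exact max_eq_left (by linarith)
    · have hm : ω ∉ {ω | v ≤ Z ω} := h
      rw [Set.indicator_of_notMem hm]; push_neg at h
      exact max_eq_right (by linarith)
  have hsetint : ∫ ω, max (Z ω - v) 0 ∂P =
      (∫ ω in {ω | v ≤ Z ω}, Z ω ∂P) - v * (1 - β) := by
    rw [integral_congr_ae (Filter.Eventually.of_forall hmax), integral_indicator hSm,
      integral_sub hZ.integrableOn (integrableOn_const (measure_ne_top _ _)),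
      setIntegral_const, measureReal_def, hPS, smul_eq_mul]
    ring
  rw [hsetint, hPS, div_eq_inv_mul]
  have hinv : (1 - β)⁻¹ * (1 - β) = 1 := inv_mul_cancel₀ (ne_of_gt hc)
  have : (1 - β)⁻¹ * ((∫ ω in {ω | v ≤ Z ω}, Z ω ∂P) - v * (1 - β)) =
      (1 - β)⁻¹ * (∫ ω in {ω | v ≤ Z ω}, Z ω ∂P) - v := by
    rw [mul_sub, mul_comm (v) (1 - β), ← mul_assoc, hinv, one_mul]
  rw [this]
  ring
end
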